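/- Let C ⊆ {0,1}^n be extremal, let s be a restriction of some concept of C to a domain Y ⊆ {1,...,n}, let B be a maximal cube of C|Y containing s, with dimension set D. Then for any cube B' of C with dim(B') = D, the unique concept h ∈ B' satisfying h|D = s|D also satisfies h|Y = s. (Correctness of the labeled compression scheme.) -/

import Mathlib

/-!
In an extremal class a maximal cube `B` with dimension set `D` is the only cube with that
dimension set. Otherwise some cube `R` with dimension set `D` differs from `B` at a coordinate
`z ∉ D`, so `B ∪ R` shatters `D ∪ {z}`; by extremality this set carries a cube `W`.
For `b ∈ B`, the face `W ∩ {w z = b z}` is a cube with dimension set `D` in the layer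
`{a z = b z}` of the class. That layer is a smaller extremal class in which `B` is still
maximal, so by induction the face is `B`, i.e. `B ⊆ W`, contradicting maximality.

Restrictions of extremal classes are extremal, and the restriction of `B'` to `Y` is a cube of
`C|Y` with dimension set `D`; hence it is `B`, and `h|Y` agrees with `c|Y` off `D`.
-/

variable {n : ℕ}

/-- `S` is shattered by the concept class `C`. -/
def Shatters (C : Set (Fin n → Bool)) (S : Finset (Fin n)) : Prop :=
  ∀ f : Fin n → Bool, ∃ c ∈ C, ∀ x ∈ S, c x = f x

/-- `B` is a cube of `C` with dimension set `S`. -/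
def IsCube (C B : Set (Fin n → Bool)) (S : Finset (Fin n)) : Prop :=
  B ⊆ C ∧ (∀ b ∈ B, ∀ b' ∈ B, ∀ x, x ∉ S → b x = b' x) ∧
    (∀ f : Fin n → Bool, ∃ b ∈ B, ∀ x ∈ S, b x = f x)

/-- `S` is strongly shattered by `C`. -/
def StronglyShatters (C : Set (Fin n → Bool)) (S : Finset (Fin n)) : Prop :=
  ∃ B, IsCube C B S

/-- `C` is extremal: every shattered set is strongly shattered. -/
def Extremal (C : Set (Fin n → Bool)) : Prop :=
  ∀ S, Shatters C S → StronglyShatters C S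

/-- The restriction of a concept to `S` (coordinates outside `S` set to `false`). -/
def restrictF (c : Fin n → Bool) (S : Finset (Fin n)) : Fin n → Bool :=
  fun x => if x ∈ S then c x else false

/-- The restriction `C|S` of a concept class to the coordinate set `S`. -/
def restrictC (C : Set (Fin n → Bool)) (S : Finset (Fin n)) : Set (Fin n → Bool) :=
  (restrictF · S) '' C

def layer (A : Set (Fin n → Bool)) (z : Fin n) (v : Bool) : Set (Fin n → Bool) :=
  {a ∈ A | a z = v}

def IsMaximalCube (A B : Set (Fin n → Bool)) (D : Finset (Fin n)) : Prop :=
  IsCube A B D ∧ ∀ B'' S'', IsCube A B'' S'' → B ⊆ B'' → B = B''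

lemma Shatters.mono {A A' : Set (Fin n → Bool)} {S : Finset (Fin n)} (h : Shatters A S)
    (hA : A ⊆ A') : Shatters A' S := fun f =>
  let ⟨a, ha, haf⟩ := h f
  ⟨a, hA ha, haf⟩

lemma layer_subset (A : Set (Fin n → Bool)) (z : Fin n) (v : Bool) : layer A z v ⊆ A :=
  fun _ ha => ha.1

namespace IsCube

variable {A A' P W : Set (Fin n → Bool)} {D : Finset (Fin n)}

lemma shatters (hP : IsCube A P D) : Shatters A D := fun f => by
  obtain ⟨p, hp, hpf⟩ := hP.2.2 f
  exact ⟨p, hP.1 hp, hpf⟩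

lemma nonempty (hP : IsCube A P D) : P.Nonempty :=
  let ⟨p, hp, _⟩ := hP.2.2 fun _ => false
  ⟨p, hp⟩

lemma mono (hP : IsCube A P D) (hA : A ⊆ A') : IsCube A' P D :=
  ⟨hP.1.trans hA, hP.2⟩

lemma of_subset (hP : IsCube A P D) (hPA' : P ⊆ A') : IsCube A' P D :=
  ⟨hPA', hP.2⟩

lemma eq_setOf {p : Fin n → Bool} (hP : IsCube A P D) (hp : p ∈ P) :
    P = {g | ∀ x ∉ D, g x = p x} := by
  ext g
  refine ⟨fun hg x hx => hP.2.1 g hg p hp x hx, fun hg => ?_⟩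
  obtain ⟨q, hq, hqg⟩ := hP.2.2 g
  have hqg' : q = g := funext fun x => by
    by_cases hx : x ∈ D
    · exact hqg x hx
    · rw [hP.2.1 q hq p hp x hx, hg x hx]
  exact hqg' ▸ hq

lemma exists_ne_of_ne {R : Set (Fin n → Bool)} {p q : Fin n → Bool}
    (hP : IsCube A P D) (hp : p ∈ P) (hR : IsCube A' R D) (hq : q ∈ R) (hPR : P ≠ R) :
    ∃ z ∉ D, p z ≠ q z := by
  by_contra! h
  rw [hP.eq_setOf hp, hR.eq_setOf hq] at hPR
  exact hPR (Set.ext fun g => forall₂_congr fun x hx => by rw [h x hx])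

lemma toLayer {p : Fin n → Bool} {z : Fin n} (hP : IsCube A P D) (hp : p ∈ P) (hz : z ∉ D) :
    IsCube (layer A z (p z)) P D :=
  hP.of_subset fun q hq => ⟨hP.1 hq, hP.2.1 q hq p hp z hz⟩

lemma face {z : Fin n} (hW : IsCube A W (insert z D)) (hz : z ∉ D) (v : Bool) :
    IsCube (layer A z v) (layer W z v) D := by
  obtain ⟨hWA, hWagree, hWall⟩ := hW
  refine ⟨fun w hw => ⟨hWA hw.1, hw.2⟩, fun b hb b' hb' x hx => ?_, fun f => ?_⟩
  · by_cases hxz : x = z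
    · subst hxz; rw [hb.2, hb'.2]
    · exact hWagree b hb.1 b' hb'.1 x (by simp [hxz, hx])
  · obtain ⟨w, hw, hwf⟩ := hWall (Function.update f z v)
    refine ⟨w, ⟨hw, by simpa using hwf z (Finset.mem_insert_self z D)⟩, fun x hx => ?_⟩
    have hxz : x ≠ z := by rintro rfl; exact hz hx
    simpa [Function.update_of_ne hxz] using hwf x (Finset.mem_insert_of_mem hx)

lemma restrict {C : Set (Fin n → Bool)} {Y : Finset (Fin n)} (hP : IsCube C P D) (hDY : D ⊆ Y) :
    IsCube (restrictC C Y) ((restrictF · Y) '' P) D := by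
  refine ⟨Set.image_mono hP.1, ?_, fun f => ?_⟩
  · rintro _ ⟨p, hp, rfl⟩ _ ⟨q, hq, rfl⟩ x hx
    simp only [restrictF]
    split_ifs
    · exact hP.2.1 p hp q hq x hx
    · rfl
  · obtain ⟨p, hp, hpf⟩ := hP.2.2 f
    exact ⟨restrictF p Y, Set.mem_image_of_mem _ hp, fun x hx => by
      simpa [restrictF, hDY hx] using hpf x hx⟩

end IsCube

lemma shatters_insert_of_layers {A : Set (Fin n → Bool)} {D : Finset (Fin n)} {z : Fin n}
    {v w : Bool} (hv : Shatters (layer A z v) D) (hw : Shatters (layer A z w) D) (hvw : v ≠ w) :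
    Shatters A (insert z D) := by
  intro f
  have hfz : f z = v ∨ f z = w := by
    revert hvw; cases v <;> cases w <;> cases f z <;> simp
  obtain ⟨a, ha, haf⟩ : ∃ a ∈ layer A z (f z), ∀ x ∈ D, a x = f x := by
    rcases hfz with hf | hf <;> rw [hf]
    exacts [hv f, hw f]
  exact ⟨a, ha.1, Finset.forall_mem_insert _ _ _ |>.mpr ⟨ha.2, haf⟩⟩

lemma Extremal.layer {A : Set (Fin n → Bool)} (hA : Extremal A) (z : Fin n) (v : Bool) :
    Extremal (layer A z v) := by
  intro S hS
  have hz : z ∉ S := fun hzS => by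
    obtain ⟨a, ha, haf⟩ := hS fun _ => !v
    simpa [ha.2] using haf z hzS
  obtain ⟨Q, hQ⟩ := hA S (hS.mono (layer_subset A z v))
  obtain ⟨q, hq⟩ := hQ.nonempty
  by_cases hqz : q z = v
  · exact ⟨Q, hqz ▸ hQ.toLayer hq hz⟩
  -- `Q` lies in the opposite layer, so both layers shatter `S` and a face of a cube on
  -- `insert z S` does the job.
  · obtain ⟨W, hW⟩ :=
      hA _ (shatters_insert_of_layers hS (hQ.toLayer hq hz).shatters (Ne.symm hqz))
    exact ⟨_, hW.face hz v⟩

namespace IsMaximalCube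

variable {A B : Set (Fin n → Bool)} {D : Finset (Fin n)}

lemma of_subset {A' : Set (Fin n → Bool)} (hB : IsMaximalCube A B D) (hA' : A' ⊆ A)
    (hBA' : B ⊆ A') : IsMaximalCube A' B D :=
  ⟨hB.1.of_subset hBA', fun B'' S'' h hsub => hB.2 B'' S'' (h.mono hA') hsub⟩

lemma not_subset_of_isCube_insert {W : Set (Fin n → Bool)} {z : Fin n} (hB : IsMaximalCube A B D)
    (hW : IsCube A W (insert z D)) (hz : z ∉ D) : ¬ B ⊆ W := by
  intro hBW
  obtain rfl := hB.2 W _ hW hBW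
  obtain ⟨b, hb⟩ := hB.1.nonempty
  obtain ⟨w, hw, hwf⟩ := hW.2.2 fun _ => !b z
  simpa [hwf z (Finset.mem_insert_self z D)] using hB.1.2.1 w hw b hb z hz

theorem eq_of_isCube {R : Set (Fin n → Bool)} (hA : Extremal A) (hB : IsMaximalCube A B D)
    (hR : IsCube A R D) : R = B := by
  induction A using WellFoundedLT.induction generalizing R with
  | _ A ih =>
  by_contra hRB
  obtain ⟨b, hb⟩ := hB.1.nonempty
  obtain ⟨r, hr⟩ := hR.nonempty
  obtain ⟨z, hz, hbr⟩ := hB.1.exists_ne_of_ne hb hR hr (Ne.symm hRB)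
  have hBz := hB.1.toLayer hb hz
  obtain ⟨W, hW⟩ :=
    hA _ (shatters_insert_of_layers hBz.shatters (hR.toLayer hr hz).shatters hbr)
  have hlt : layer A z (b z) < A :=
    (layer_subset A z _).ssubset_of_not_subset fun h => hbr (h (hR.1 hr)).2.symm
  have hface : layer W z (b z) = B :=
    ih _ hlt (hA.layer z _) (hB.of_subset (layer_subset A z _) hBz.1) (hW.face hz _)
  exact hB.not_subset_of_isCube_insert hW hz (hface ▸ layer_subset W z _)

end IsMaximalCube

namespace Shatters

variable {C : Set (Fin n → Bool)} {S Y : Finset (Fin n)}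

lemma subset_of_restrictC (h : Shatters (restrictC C Y) S) : S ⊆ Y := by
  intro x hx
  by_contra hxY
  obtain ⟨_, ⟨c, -, rfl⟩, hc⟩ := h fun _ => true
  simpa [restrictF, hxY] using hc x hx

lemma of_restrictC (h : Shatters (restrictC C Y) S) : Shatters C S := fun f => by
  obtain ⟨_, ⟨c, hc, rfl⟩, hcf⟩ := h f
  exact ⟨c, hc, fun x hx => by simpa [restrictF, h.subset_of_restrictC hx] using hcf x hx⟩

end Shatters

lemma Extremal.restrict {C : Set (Fin n → Bool)} (hC : Extremal C) (Y : Finset (Fin n)) :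
    Extremal (restrictC C Y) := fun S hS =>
  let ⟨_, hQ⟩ := hC S hS.of_restrictC
  ⟨_, hQ.restrict hS.subset_of_restrictC⟩

theorem compression_correctness_general (n : ℕ) (C : Set (Fin n → Bool))
    (Y D : Finset (Fin n)) (B B' : Set (Fin n → Bool)) (c h : Fin n → Bool)
    (hC : Extremal C) (hDY : D ⊆ Y)
    (hB : IsCube (restrictC C Y) B D)
    (hBmax : ∀ B'' S'', IsCube (restrictC C Y) B'' S'' → B ⊆ B'' → B = B'')
    (hsB : restrictF c Y ∈ B)
    (hB' : IsCube C B' D) (hh : h ∈ B') (hagree : ∀ x ∈ D, h x = c x) :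
    ∀ x ∈ Y, h x = c x := by
  intro x hxY
  by_cases hxD : x ∈ D
  · exact hagree x hxD
  have hB'B : (restrictF · Y) '' B' = B :=
    IsMaximalCube.eq_of_isCube (hC.restrict Y) ⟨hB, hBmax⟩ (hB'.restrict hDY)
  have hhB : restrictF h Y ∈ B := hB'B ▸ Set.mem_image_of_mem _ hh
  simpa [restrictF, hxY] using hB.2.1 _ hhB _ hsB x hxD

/-- Correctness of the labeled compression scheme: if the sample `c|Y` lies in a
maximal cube `B` of `C|Y` with dimension set `D`, then for any cube `B'` of `C`
with dimension set `D`, the concept `h ∈ B'` agreeing with `c` on `D` also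
agrees with `c` on all of `Y`. -/
theorem compression_correctness (n : ℕ) (C : Set (Fin n → Bool))
    (Y D : Finset (Fin n)) (B B' : Set (Fin n → Bool)) (c h : Fin n → Bool)
    (hC : Extremal C) (hc : c ∈ C) (hDY : D ⊆ Y)
    (hB : IsCube (restrictC C Y) B D)
    (hBmax : ∀ B'' S'', IsCube (restrictC C Y) B'' S'' → B ⊆ B'' → B = B'')
    (hsB : restrictF c Y ∈ B)
    (hB' : IsCube C B' D) (hh : h ∈ B') (hagree : ∀ x ∈ D, h x = c x) :
    ∀ x ∈ Y, h x = c x :=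
  compression_correctness_general n C Y D B B' c h hC hDY hB hBmax hsB hB' hh hagree
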